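/- Consider the spatial spectrum access game under the physical interference model with homogeneous channel availability: players 𝒩 = {1,…,N}, channels ℳ = {1,…,M}, parameters θ ∈ (0,1], W > 0, α > 0, transmission powers η_n > 0, transmitter–receiver distances d_n > 0, symmetric cross distances d_{ij} = d_{ji} > 0 for i ≠ j, background noise ω_0 > 0, and primary-user interference ω_m^n ≥ 0; player n's payoff under profile a ∈ ℳ^N is U_n(a) = θ·W·log₂( 1 + η_n·d_n^{−α} / ( ω_0 + ω_{a_n}^n + Σ_{i ≠ n : a_i = a_n} η_i·d_{in}^{−α} ) ). Then Φ(a) = −Σ_{i} Σ_{j ≠ i} η_i·η_j·d_{ij}^{−α}·𝟙{a_i = a_j} − 2·Σ_{n=1}^N η_n·(ω_{a_n}^n + ω_0) is an ordinal potential for the game, and consequently the game has a pure Nash equilibrium. -/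

import Mathlib

/-!
Let `Dₙ(a) = ω₀ + ω_{aₙ}ⁿ + Σ_{i ≠ n, aᵢ = aₙ} ηᵢ d_{in}^{-α}` be the noise plus interference at
the receiver of player `n`. When `n` alone deviates, only the pairs containing `n` change in the
double sum of `Φ`; by the symmetry `d_{ij} = d_{ji}` each such pair is counted twice, so
`Φ(a') - Φ(a) = 2 ηₙ (Dₙ(a) - Dₙ(a'))`. Since `Uₙ` is a strictly decreasing function of `Dₙ`, the
two differences have the same sign, and a maximiser of `Φ` over the finitely many profiles is a
pure Nash equilibrium.
-/

open Finset Function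

theorem Real.sign_eq_sign_of_iff {x y : ℝ} (hpos : 0 < x ↔ 0 < y) (hneg : x < 0 ↔ y < 0) :
    Real.sign x = Real.sign y := by
  simp only [Real.sign, hpos, hneg]

theorem Real.sign_mul_of_pos {c : ℝ} (hc : 0 < c) (x : ℝ) : Real.sign (c * x) = Real.sign x :=
  Real.sign_eq_sign_of_iff (mul_pos_iff_of_pos_left hc)
    (by rw [← mul_zero c, mul_lt_mul_iff_right₀ hc, mul_zero])

theorem Real.sign_eq_one_iff {x : ℝ} : Real.sign x = 1 ↔ 0 < x := by
  unfold Real.sign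
  split_ifs with hneg hpos
  · norm_num; linarith
  · simp [hpos]
  · simp [hpos]

theorem StrictAntiOn.sign_sub {s : Set ℝ} {f : ℝ → ℝ} (hf : StrictAntiOn f s) {x y : ℝ}
    (hx : x ∈ s) (hy : y ∈ s) : Real.sign (f x - f y) = Real.sign (y - x) :=
  Real.sign_eq_sign_of_iff (by rw [sub_pos, sub_pos, hf.lt_iff_gt hy hx])
    (by rw [sub_neg, sub_neg, hf.lt_iff_gt hx hy])

theorem strictAntiOn_mul_logb_one_add_div {b k c : ℝ} (hb : 1 < b) (hk : 0 < k) (hc : 0 < c) :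
    StrictAntiOn (fun z => k * Real.logb b (1 + c / z)) (Set.Ioi 0) := by
  intro x hx y hy hxy
  have : 0 < 1 + c / y := by have : (0 : ℝ) < y := hy; positivity
  dsimp only
  gcongr

section OrdinalPotential

variable {ι K : Type*} [DecidableEq ι]

def IsOrdinalPotential (U : (ι → K) → ι → ℝ) (Φ : (ι → K) → ℝ) : Prop :=
  ∀ (n : ι) (a : ι → K) (m : K),
    Real.sign (Φ (update a n m) - Φ a) = Real.sign (U (update a n m) n - U a n)

theorem IsOrdinalPotential.exists_nash [Finite ι] [Finite K] [Nonempty K]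
    {U : (ι → K) → ι → ℝ} {Φ : (ι → K) → ℝ} (hΦ : IsOrdinalPotential U Φ) :
    ∃ a : ι → K, ∀ n m, U (update a n m) n ≤ U a n := by
  obtain ⟨a, ha⟩ := Finite.exists_max Φ
  refine ⟨a, fun n m => not_lt.1 fun hU => ?_⟩
  have hΦlt : 0 < Φ (update a n m) - Φ a := by
    rw [← Real.sign_eq_one_iff, hΦ, Real.sign_eq_one_iff, sub_pos]
    exact hU
  linarith [ha (update a n m)]

end OrdinalPotential

theorem Finset.sum_sum_eq_two_nsmul_sum_of_symm {ι M : Type*} [Fintype ι] [AddCommMonoid M]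
    (h : ι → ι → M) (n : ι) (hsymm : ∀ i j, h i j = h j i) (hdiag : h n n = 0)
    (hzero : ∀ i j, i ≠ n → j ≠ n → h i j = 0) :
    ∑ i, ∑ j, h i j = 2 • ∑ j, h n j := by
  classical
  have hrow : ∀ i ≠ n, ∑ j, h i j = h n i := fun i hi => by
    rw [sum_eq_single n (fun j _ hj => hzero i j hi hj) (by simp), hsymm]
  rw [← add_sum_erase _ _ (mem_univ n), sum_congr rfl fun i hi => hrow i (ne_of_mem_erase hi),
    sum_erase _ hdiag, two_nsmul]

theorem Finset.sum_apply_update_sub {ι K M : Type*} [Fintype ι] [DecidableEq ι] [AddCommGroup M]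
    (F : ι → K → M) (b : ι → K) (n : ι) (m : K) :
    ∑ k, F k (update b n m k) - ∑ k, F k (b k) = F n m - F n (b n) := by
  rw [← sum_sub_distrib, sum_eq_single n (fun k _ hk => by rw [update_of_ne hk, sub_self])
    (by simp), update_self]

namespace InterferenceGame

variable {ι K : Type*} [Fintype ι] [DecidableEq ι] [DecidableEq K]

/-- `v i n` is the power received at `n` from transmitter `i` when both use the same channel. -/
def interference (v : ι → ι → ℝ) (b : ι → K) (n : ι) : ℝ :=
  ∑ i ∈ univ.filter (fun i => i ≠ n ∧ b i = b n), v i n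

def pairInterference (v : ι → ι → ℝ) (b : ι → K) : ℝ :=
  ∑ i, ∑ j ∈ univ.erase i, v i j * if b i = b j then 1 else 0

def cost (v : ι → ι → ℝ) (g : ι → K → ℝ) (b : ι → K) (n : ι) : ℝ :=
  g n (b n) + interference v b n

def potential (v : ι → ι → ℝ) (g : ι → K → ℝ) (b : ι → K) : ℝ :=
  -pairInterference v b - 2 * ∑ k, g k (b k)

theorem interference_nonneg {v : ι → ι → ℝ} (hv : ∀ i j, i ≠ j → 0 ≤ v i j) (b : ι → K)
    (n : ι) : 0 ≤ interference v b n :=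
  sum_nonneg fun i hi => hv i n (mem_filter.1 hi).2.1

theorem interference_eq_sum_erase (v : ι → ι → ℝ) (b : ι → K) (n : ι) :
    interference v b n = ∑ i ∈ univ.erase n, v i n * if b i = b n then 1 else 0 := by
  rw [interference, ← filter_filter, filter_ne', sum_filter]
  simp only [mul_ite, mul_one, mul_zero]

theorem pairInterference_update_sub (v : ι → ι → ℝ) (hv : ∀ i j, i ≠ j → v i j = v j i)
    (b : ι → K) (n : ι) (m : K) :
    pairInterference v (update b n m) - pairInterference v b =
      2 * (interference v (update b n m) n - interference v b n) := by
  set b' := update b n m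
  set h : ι → ι → ℝ := fun i j =>
    v i j * ((if b' i = b' j then 1 else 0) - if b i = b j then 1 else 0) with h_def
  have hdiag : ∀ i, h i i = 0 := fun i => by simp [h_def]
  have hsymm : ∀ i j, h i j = h j i := fun i j => by
    rcases eq_or_ne i j with rfl | hij
    · rfl
    · simp only [h_def, hv i j hij, eq_comm]
  have hzero : ∀ i j, i ≠ n → j ≠ n → h i j = 0 := fun i j hi hj => by
    simp [h_def, b', update_of_ne hi, update_of_ne hj]
  have hrow : ∀ i, ∑ j ∈ univ.erase i, v i j * (if b' i = b' j then 1 else 0) -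
      ∑ j ∈ univ.erase i, v i j * (if b i = b j then 1 else 0) = ∑ j, h i j := fun i => by
    rw [← sum_sub_distrib, ← sum_erase _ (hdiag i)]
    simp only [h_def, mul_sub]
  have hcol : ∑ j, h n j = interference v b' n - interference v b n := by
    rw [interference_eq_sum_erase, interference_eq_sum_erase, ← sum_sub_distrib,
      ← sum_erase _ (hdiag n)]
    exact sum_congr rfl fun j _ => by rw [hsymm]; exact mul_sub _ _ _
  rw [pairInterference, pairInterference, ← sum_sub_distrib, sum_congr rfl fun i _ => hrow i,
    sum_sum_eq_two_nsmul_sum_of_symm h n hsymm (hdiag n) hzero, hcol, nsmul_eq_mul,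
    Nat.cast_ofNat]

theorem potential_update_sub (v : ι → ι → ℝ) (hv : ∀ i j, i ≠ j → v i j = v j i)
    (g : ι → K → ℝ) (b : ι → K) (n : ι) (m : K) :
    potential v g (update b n m) - potential v g b =
      2 * (cost v g b n - cost v g (update b n m) n) := by
  have hpair := pairInterference_update_sub v hv b n m
  have hself := sum_apply_update_sub g b n m
  rw [potential, potential, cost, cost, update_self]
  linear_combination -hpair - 2 * hself

end InterferenceGame

open InterferenceGame

theorem stmt_16_general (N M : ℕ)
    (θ W α : ℝ) (hθ : 0 < θ ∧ θ ≤ 1) (hW : 0 < W)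
    (η : Fin N → ℝ) (hη : ∀ n, 0 < η n)
    (d : Fin N → ℝ) (hd : ∀ n, 0 < d n)
    (dc : Fin N → Fin N → ℝ) (hdc : ∀ i j, i ≠ j → 0 < dc i j)
    (hdcsym : ∀ i j, i ≠ j → dc i j = dc j i)
    (ω0 : ℝ) (hω0 : 0 < ω0)
    (ω : Fin (M + 1) → Fin N → ℝ) (hω : ∀ m n, 0 ≤ ω m n)
    (U : (Fin N → Fin (M + 1)) → Fin N → ℝ)
    (hU : ∀ a n, U a n = θ * W * Real.logb 2 (1 + η n * d n ^ (-α) /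
      (ω0 + ω (a n) n +
        ∑ i ∈ Finset.univ.filter (fun i => i ≠ n ∧ a i = a n),
          η i * dc i n ^ (-α))))
    (Φ : (Fin N → Fin (M + 1)) → ℝ)
    (hΦ : ∀ a, Φ a = -(∑ i, ∑ j ∈ Finset.univ.erase i,
        η i * η j * dc i j ^ (-α) * (if a i = a j then 1 else 0)) -
      2 * ∑ n, η n * (ω (a n) n + ω0)) :
    (∀ (n : Fin N) (a : Fin N → Fin (M + 1)) (m : Fin (M + 1)),
      Real.sign (Φ (Function.update a n m) - Φ a) =
        Real.sign (U (Function.update a n m) n - U a n)) ∧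
    ∃ a : Fin N → Fin (M + 1), ∀ (n : Fin N) (m : Fin (M + 1)),
      U (Function.update a n m) n ≤ U a n := by
  set w : Fin N → Fin N → ℝ := fun i j => η i * dc i j ^ (-α)
  set D : (Fin N → Fin (M + 1)) → Fin N → ℝ := fun a n => ω0 + ω (a n) n + interference w a n
  have hD : ∀ a n, 0 < D a n := fun a n =>
    add_pos_of_pos_of_nonneg (add_pos_of_pos_of_nonneg hω0 (hω _ _)) <| interference_nonneg
      (fun i j hij => (mul_pos (hη i) (Real.rpow_pos_of_pos (hdc i j hij) _)).le) a n
  have hΦD : ∀ n a m, Φ (update a n m) - Φ a = 2 * η n * (D a n - D (update a n m) n) := by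
    intro n a m
    have hΦv : Φ = potential (fun i j => η i * η j * dc i j ^ (-α))
        (fun k c => η k * (ω c k + ω0)) := funext hΦ
    have hcost : ∀ b, cost (fun i j => η i * η j * dc i j ^ (-α))
        (fun k c => η k * (ω c k + ω0)) b n = η n * D b n := fun b => by
      simp only [cost, interference, D, w, mul_add, mul_sum]
      ring_nf
    rw [hΦv, potential_update_sub _ (fun i j hij => by rw [hdcsym i j hij]; ring), hcost, hcost]
    ring
  have hUD : ∀ a n, U a n = θ * W * Real.logb 2 (1 + η n * d n ^ (-α) / D a n) := hU
  have hpot : IsOrdinalPotential U Φ := fun n a m => by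
    rw [hΦD, Real.sign_mul_of_pos (mul_pos two_pos (hη n)), hUD, hUD]
    exact ((strictAntiOn_mul_logb_one_add_div one_lt_two (mul_pos hθ.1 hW)
      (mul_pos (hη n) (Real.rpow_pos_of_pos (hd n) _))).sign_sub (hD _ _) (hD _ _)).symm
  exact ⟨hpot, hpot.exists_nash⟩

/-- Spatial spectrum access game under the physical interference model with homogeneous
channel availability: `Φ(a) = −Σᵢ Σ_{j≠i} ηᵢηⱼ d_{ij}^{−α} 𝟙{aᵢ=aⱼ} − 2Σₙ ηₙ(ω_{aₙ}ⁿ+ω₀)`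
is an ordinal potential, and the game has a pure Nash equilibrium. -/
theorem stmt_16 (N M : ℕ)
    (θ W α : ℝ) (hθ : 0 < θ ∧ θ ≤ 1) (hW : 0 < W) (hα : 0 < α)
    (η : Fin N → ℝ) (hη : ∀ n, 0 < η n)
    (d : Fin N → ℝ) (hd : ∀ n, 0 < d n)
    (dc : Fin N → Fin N → ℝ) (hdc : ∀ i j, i ≠ j → 0 < dc i j)
    (hdcsym : ∀ i j, i ≠ j → dc i j = dc j i)
    (ω0 : ℝ) (hω0 : 0 < ω0)
    (ω : Fin (M + 1) → Fin N → ℝ) (hω : ∀ m n, 0 ≤ ω m n)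
    (U : (Fin N → Fin (M + 1)) → Fin N → ℝ)
    (hU : ∀ a n, U a n = θ * W * Real.logb 2 (1 + η n * d n ^ (-α) /
      (ω0 + ω (a n) n +
        ∑ i ∈ Finset.univ.filter (fun i => i ≠ n ∧ a i = a n),
          η i * dc i n ^ (-α))))
    (Φ : (Fin N → Fin (M + 1)) → ℝ)
    (hΦ : ∀ a, Φ a = -(∑ i, ∑ j ∈ Finset.univ.erase i,
        η i * η j * dc i j ^ (-α) * (if a i = a j then 1 else 0)) -
      2 * ∑ n, η n * (ω (a n) n + ω0)) :
    (∀ (n : Fin N) (a : Fin N → Fin (M + 1)) (m : Fin (M + 1)),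
      Real.sign (Φ (Function.update a n m) - Φ a) =
        Real.sign (U (Function.update a n m) n - U a n)) ∧
    ∃ a : Fin N → Fin (M + 1), ∀ (n : Fin N) (m : Fin (M + 1)),
      U (Function.update a n m) n ≤ U a n :=
  stmt_16_general N M θ W α hθ hW η hη d hd dc hdc hdcsym ω0 hω0 ω hω U hU Φ hΦ
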